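/- Let G = (V, E, w) be a vertex-weighted graph with weight function w : V → ℤ⁺, and let S ⊆ V contain a redundant vertex v. Then w(S ∖ {v}) + max_{C ∈ cc(G − (S ∖ {v}))} w(V(C)) ≤ w(S) + max_{C ∈ cc(G − S)} w(V(C)). -/
import Mathlib


namespace VI

open SimpleGraph

variable {V : Type*}

/-- Total weight of a set of vertices. -/
noncomputable def setWeight (w : V → ℕ) (X : Set V) : ℕ := ∑ᶠ v ∈ X, w v

/-- Maximum weight of a connected component of `G − S`. -/
noncomputable def compMax (G : SimpleGraph V) (w : V → ℕ) (S : Set V) : ℕ :=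
  sSup {n | ∃ C : (G.induce Sᶜ).ConnectedComponent, n = setWeight w (Subtype.val '' C.supp)}

/-- `w(S) + max_{C ∈ cc(G−S)} w(V(C))`. -/
noncomputable def viCost (G : SimpleGraph V) (w : V → ℕ) (S : Set V) : ℕ :=
  setWeight w S + compMax G w S

/-- The weighted vertex integrity of `G`. -/
noncomputable def wvi (G : SimpleGraph V) (w : V → ℕ) : ℕ := ⨅ S : Set V, viCost G w S

/-- Maximum number of vertices of a connected component of `G − S`. -/
noncomputable def uCompMax (G : SimpleGraph V) (S : Set V) : ℕ :=
  sSup {n | ∃ C : (G.induce Sᶜ).ConnectedComponent, n = C.supp.ncard}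

/-- `|S| + max_{C ∈ cc(G−S)} |V(C)|`. -/
noncomputable def uViCost (G : SimpleGraph V) (S : Set V) : ℕ := S.ncard + uCompMax G S

/-- The (unweighted) vertex integrity of `G`. -/
noncomputable def uvi (G : SimpleGraph V) : ℕ := ⨅ S : Set V, uViCost G S

/-- A vertex `v` is redundant w.r.t. `S` if at most one connected component of `G − S`
contains a neighbor of `v`. -/
def Redundant (G : SimpleGraph V) (S : Set V) (v : V) : Prop :=
  {C : (G.induce Sᶜ).ConnectedComponent | ∃ u : (Sᶜ : Set V), G.Adj v ↑u ∧ u ∈ C.supp}.Subsingleton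

/-- `S` is irredundant if it contains no redundant vertex. -/
def Irredundant (G : SimpleGraph V) (S : Set V) : Prop := ∀ v ∈ S, ¬ Redundant G S v

end VI

section Aux
open VI SimpleGraph

lemma setWeight_mono' {V} (w : V → ℕ) {X Y : Set V} (h : Y.Finite) (hs : X ⊆ Y) :
    setWeight w X ≤ setWeight w Y := by
  rw [setWeight, setWeight, finsum_mem_eq_sum w ((h.subset hs).inter_of_left _),
    finsum_mem_eq_sum w (h.inter_of_left _)]
  exact Finset.sum_le_sum_of_subset
    (Set.Finite.toFinset_subset_toFinset.2 (Set.inter_subset_inter_left _ hs))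

lemma walk_key {V : Type*} (G : SimpleGraph V) (S : Set V) (v : V) (hvS : v ∈ S)
    {a b : ↥((S \ {v} : Set V)ᶜ)} (p : (G.induce (S \ {v} : Set V)ᶜ).Walk a b)
    (hb : (b : V) ∈ Sᶜ) :
    (((a : V) = v → ∃ y : ↥(Sᶜ : Set V), G.Adj v ↑y ∧ (G.induce Sᶜ).Reachable y ⟨b, hb⟩) ∧
    (∀ ha : (a : V) ∈ Sᶜ, (G.induce Sᶜ).Reachable ⟨a, ha⟩ ⟨b, hb⟩ ∨
      ((∃ x : ↥(Sᶜ : Set V), G.Adj v ↑x ∧ (G.induce Sᶜ).Reachable ⟨a, ha⟩ x) ∧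
       (∃ y : ↥(Sᶜ : Set V), G.Adj v ↑y ∧ (G.induce Sᶜ).Reachable ⟨b, hb⟩ y)))) := by
  induction p with
  | nil =>
    refine ⟨fun hav => absurd hb (by simp [hav, hvS]), fun ha => Or.inl ?_⟩
    exact Reachable.refl _
  | @cons a c b h q ih =>
    have hac : G.Adj ↑a ↑c := h
    by_cases hc : (c : V) = v
    · constructor
      · intro hav
        exact absurd (hav ▸ hc ▸ hac) (G.irrefl)
      · intro ha
        right
        refine ⟨⟨⟨↑a, ha⟩, (hc ▸ hac).symm, Reachable.refl _⟩, ?_⟩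
        obtain ⟨y, hy1, hy2⟩ := (ih hb).1 hc
        exact ⟨y, hy1, hy2.symm⟩
    · have hcS : (c : V) ∈ Sᶜ := by
        intro hcmem
        exact c.2 ⟨hcmem, hc⟩
      constructor
      · intro hav
        rcases (ih hb).2 hcS with hr | ⟨_, hy⟩
        · exact ⟨⟨↑c, hcS⟩, by simpa [← hav] using hac, hr⟩
        · obtain ⟨y, hy1, hy2⟩ := hy
          exact ⟨y, hy1, hy2.symm⟩
      · intro ha
        have hadj : (G.induce Sᶜ).Adj ⟨↑a, ha⟩ ⟨↑c, hcS⟩ := hac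
        rcases (ih hb).2 hcS with hr | ⟨⟨x, hx1, hx2⟩, hy⟩
        · exact Or.inl (hadj.reachable.trans hr)
        · exact Or.inr ⟨⟨x, hx1, hadj.reachable.trans hx2⟩, hy⟩

end Aux



open VI SimpleGraph in
/-- Removing a redundant vertex from `S` does not increase `w(S) + max_{C ∈ cc(G−S)} w(V(C))`. -/
theorem statement0 {V : Type*} [Fintype V] (G : SimpleGraph V) (w : V → ℕ)
    (hw : ∀ v : V, 0 < w v) (S : Set V) (v : V) (hvS : v ∈ S)
    (hred : Redundant G S v) :
    setWeight w (S \ {v}) + compMax G w (S \ {v}) ≤ setWeight w S + compMax G w S := by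
  set T : Set V := S \ {v} with hT
  have hwS : setWeight w S = w v + setWeight w T := by
    have h1 : insert v T = S := by
      rw [hT, Set.insert_diff_singleton, Set.insert_eq_of_mem hvS]
    have hvT : v ∉ T := fun h => h.2 rfl
    rw [← h1, setWeight, finsum_mem_insert w hvT (Set.toFinite T)]
    rfl
  have hbdd : BddAbove {n | ∃ C : (G.induce Sᶜ).ConnectedComponent,
      n = setWeight w (Subtype.val '' C.supp)} := by
    have hss : {n | ∃ C : (G.induce Sᶜ).ConnectedComponent,
        n = setWeight w (Subtype.val '' C.supp)} ⊆
        Set.range (fun C : (G.induce Sᶜ).ConnectedComponent =>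
          setWeight w (Subtype.val '' C.supp)) := by
      rintro n ⟨C, rfl⟩; exact ⟨C, rfl⟩
    exact ((Set.finite_range _).subset hss).bddAbove
  have hkey : ∀ C' : (G.induce Tᶜ).ConnectedComponent,
      setWeight w (Subtype.val '' C'.supp) ≤ w v + compMax G w S := by
    intro C'
    by_cases hex : ∃ u : ↥(Tᶜ), u ∈ C'.supp ∧ (u : V) ∈ Sᶜ
    · obtain ⟨u0, hu0C, hu0S⟩ := hex
      set D := (G.induce Sᶜ).connectedComponentMk ⟨↑u0, hu0S⟩ with hD
      have hsub : Subtype.val '' C'.supp ⊆ insert v (Subtype.val '' D.supp) := by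
        rintro x ⟨u, huC, rfl⟩
        by_cases hxv : (u : V) = v
        · exact hxv ▸ Set.mem_insert _ _
        · have huS : (u : V) ∈ Sᶜ := fun hm => u.2 ⟨hm, hxv⟩
          refine Set.mem_insert_iff.2 (Or.inr ⟨⟨↑u, huS⟩, ?_, rfl⟩)
          have hreach : (G.induce Tᶜ).Reachable u0 u := by
            have h1 := (ConnectedComponent.mem_supp_iff _ _).1 hu0C
            have h2 := (ConnectedComponent.mem_supp_iff _ _).1 huC
            exact ConnectedComponent.eq.1 (h1.trans h2.symm)
          obtain ⟨p⟩ := hreach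
          rcases (walk_key G S v hvS p huS).2 hu0S with hr |
            ⟨⟨x, hx1, hx2⟩, ⟨y, hy1, hy2⟩⟩
          · rw [ConnectedComponent.mem_supp_iff, hD]
            exact ConnectedComponent.eq.2 hr.symm
          · have e1 : (G.induce Sᶜ).connectedComponentMk ⟨↑u0, hu0S⟩ =
                (G.induce Sᶜ).connectedComponentMk x := ConnectedComponent.eq.2 hx2
            have e2 : (G.induce Sᶜ).connectedComponentMk ⟨↑u, huS⟩ =
                (G.induce Sᶜ).connectedComponentMk y := ConnectedComponent.eq.2 hy2
            have e3 : (G.induce Sᶜ).connectedComponentMk x =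
                (G.induce Sᶜ).connectedComponentMk y :=
              hred ⟨x, hx1, (ConnectedComponent.mem_supp_iff _ _).2 rfl⟩
                ⟨y, hy1, (ConnectedComponent.mem_supp_iff _ _).2 rfl⟩
            rw [ConnectedComponent.mem_supp_iff, hD]
            exact e2.trans (e3.symm.trans e1.symm)
      have hvD : v ∉ Subtype.val '' D.supp := by
        rintro ⟨z, _, rfl⟩; exact z.2 hvS
      calc setWeight w (Subtype.val '' C'.supp)
          ≤ setWeight w (insert v (Subtype.val '' D.supp)) :=
            setWeight_mono' w (Set.toFinite _) hsub
        _ = w v + setWeight w (Subtype.val '' D.supp) := by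
            rw [setWeight, finsum_mem_insert w hvD (Set.toFinite _)]; rfl
        _ ≤ w v + compMax G w S :=
            Nat.add_le_add_left (le_csSup hbdd ⟨D, rfl⟩) _
    · have hsub : Subtype.val '' C'.supp ⊆ {v} := by
        rintro x ⟨u, huC, rfl⟩
        by_contra hxv
        exact hex ⟨u, huC, fun hm => u.2 ⟨hm, fun h => hxv h⟩⟩
      calc setWeight w (Subtype.val '' C'.supp) ≤ setWeight w {v} :=
            setWeight_mono' w (Set.finite_singleton v) hsub
        _ = w v := by rw [setWeight, finsum_mem_singleton]
        _ ≤ w v + compMax G w S := Nat.le_add_right _ _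
  have h2 : compMax G w T ≤ w v + compMax G w S := by
    apply csSup_le'
    rintro n ⟨C', rfl⟩
    exact hkey C'
  omega
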